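/- arXiv:1802.01296 — 3 statements merged into one kernel-verified Lean document; each statement's English description precedes it below -/
import Mathlib

section
/- Let V be a finite-dimensional vector space over 𝔽₂ and λ : V × V → 𝔽₂ a symmetric bilinear form with adjoint map λ̂ : V → V*, v ↦ (w ↦ λ(v,w)). Then the linear functional γ(λ) : v ↦ λ(v,v) lies in the image of λ̂; that is, there exists d ∈ V with λ(d,w) = λ(w,w) for all w ∈ V. -/
/-- Let `V` be a finite-dimensional vector space over `𝔽₂` and `B` a symmetric
bilinear form on `V` with adjoint `B̂ : V → V*`, `v ↦ (w ↦ B v w)`.  Then the linear functional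
`γ(B) : v ↦ B v v` lies in the image of `B̂`; i.e. there is `d : V` with `B d w = B w w`
for all `w`. -/
theorem gamma_mem_image_adjoint (V : Type*) [AddCommGroup V] [Module (ZMod 2) V]
    [FiniteDimensional (ZMod 2) V] (B : LinearMap.BilinForm (ZMod 2) V)
    (hsymm : ∀ v w : V, B v w = B w v) :
    ∃ d : V, ∀ w : V, B d w = B w w := by
  -- γ : v ↦ B v v is linear in characteristic 2
  let γ : Module.Dual (ZMod 2) V :=
    { toFun := fun v => B v v
      map_add' := fun u v => by
        have h2 : B u v + B v u = 0 := by
          rw [hsymm u v, ← two_smul (ZMod 2) (B v u)]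
          simp [show (2 : ZMod 2) = 0 from rfl]
        simp only [map_add, LinearMap.add_apply]
        linear_combination h2
      map_smul' := fun c v => by
        have hc : c * c = c := by fin_cases c <;> rfl
        simp only [map_smul, LinearMap.smul_apply, smul_eq_mul, RingHom.id_apply,
          ← mul_assoc, hc] }
  -- B viewed as V →ₗ Dual V is its own dual map composed with eval, so its range is
  -- the annihilator of its kernel.
  have hrange : LinearMap.range B = (LinearMap.ker B).dualAnnihilator := by
    have hcomp : B.dualMap ∘ₗ Module.Dual.eval (ZMod 2) V = B := by
      ext v w
      simp [LinearMap.dualMap_apply, Module.Dual.eval, hsymm v w]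
    have hsurj : Function.Surjective (Module.Dual.eval (ZMod 2) V) :=
      (Module.evalEquiv (ZMod 2) V).surjective
    calc LinearMap.range B = LinearMap.range (B.dualMap ∘ₗ Module.Dual.eval (ZMod 2) V) := by
          rw [hcomp]
      _ = LinearMap.range B.dualMap := LinearMap.range_comp_of_range_eq_top _
            (LinearMap.range_eq_top.mpr hsurj)
      _ = (LinearMap.ker B).dualAnnihilator := LinearMap.range_dualMap_eq_dualAnnihilator_ker B
  have hγ : γ ∈ LinearMap.range B := by
    rw [hrange]
    rw [Submodule.mem_dualAnnihilator]
    intro v hv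
    have : B v = 0 := hv
    show B v v = 0
    rw [this]; rfl
  obtain ⟨d, hd⟩ := hγ
  exact ⟨d, fun w => by rw [hd]; rfl⟩
end

section
/- Let A be a symmetric n × n matrix over 𝔽₂. Then the diagonal vector of A (the vector whose i-th entry is A i i) lies in the column space of A. -/
private lemma zmod2_mul_self (a : ZMod 2) : a * a = a := by revert a; decide

/-- Key quadratic identity: for symmetric `A` over `𝔽₂`, `yᵀ A y = ∑ i, A i i * y i`. -/
private lemma quad_eq_diag (n : ℕ) (A : Matrix (Fin n) (Fin n) (ZMod 2)) (hA : A.IsSymm)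
    (y : Fin n → ZMod 2) :
    ∑ i, y i * ∑ j, A i j * y j = ∑ i, A i i * y i := by
  have hsplit : ∑ i, y i * ∑ j, A i j * y j
      = ∑ p ∈ Finset.univ ×ˢ Finset.univ, y p.1 * A p.1 p.2 * y p.2 := by
    rw [Finset.sum_product]
    simp [Finset.mul_sum, mul_assoc]
  rw [hsplit]
  classical
  rw [← Finset.sum_filter_add_sum_filter_not (Finset.univ ×ˢ Finset.univ)
      (fun p => p.1 = p.2)]
  have hdiag : ∑ p ∈ (Finset.univ ×ˢ Finset.univ).filter (fun p => p.1 = p.2),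
      y p.1 * A p.1 p.2 * y p.2 = ∑ i, A i i * y i := by
    rw [Finset.sum_filter]
    rw [Finset.sum_product]
    simp only [Finset.sum_ite_eq, Finset.mem_univ, if_true]
    refine Finset.sum_congr rfl fun i _ => ?_
    rw [mul_comm (y i), mul_assoc, zmod2_mul_self]
  have hoff : ∑ p ∈ (Finset.univ ×ˢ Finset.univ).filter (fun p => ¬ p.1 = p.2),
      y p.1 * A p.1 p.2 * y p.2 = 0 := by
    refine Finset.sum_involution (fun p _ => p.swap) ?_ ?_ ?_ ?_
    · intro p _
      have hsym : A p.2 p.1 = A p.1 p.2 := by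
        have := congrFun (congrFun hA p.1) p.2
        simpa [Matrix.transpose_apply] using this
      have h : y p.1 * A p.1 p.2 * y p.2 + y p.2 * A p.2 p.1 * y p.1
          = 2 * (y p.1 * A p.1 p.2 * y p.2) := by rw [hsym]; ring
      simp only [Prod.fst_swap, Prod.snd_swap]
      rw [h, show (2 : ZMod 2) = 0 by decide, zero_mul]
    · intro p hp _
      simp only [Finset.mem_filter] at hp
      intro h
      exact hp.2 (by simpa [Prod.ext_iff] using congrArg Prod.fst h ▸ (Prod.ext_iff.mp h).1)
    · intro p hp
      simp only [Finset.mem_filter, Finset.mem_product, Finset.mem_univ, true_and] at hp ⊢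
      exact fun h => hp (h.symm)
    · intro p _; rfl
  rw [hdiag, hoff, add_zero]

/-- Let `A` be a symmetric `n × n` matrix over `𝔽₂`.  Then the diagonal vector
of `A` lies in the column space of `A` (the range of `x ↦ A *ᵥ x`). -/
theorem diagonal_mem_column_space (n : ℕ) (A : Matrix (Fin n) (Fin n) (ZMod 2))
    (hA : A.IsSymm) :
    ∃ x : Fin n → ZMod 2, A.mulVec x = fun i => A i i := by
  have key : (fun i => A i i) ∈ LinearMap.range A.mulVecLin := by
    rw [← Subspace.forall_mem_dualAnnihilator_apply_eq_zero_iff]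
    intro φ hφ
    rw [Submodule.mem_dualAnnihilator] at hφ
    set y : Fin n → ZMod 2 := fun i => φ (fun j => if i = j then 1 else 0) with hy
    have hφeq : ∀ v : Fin n → ZMod 2, φ v = ∑ i, v i * y i := by
      intro v
      rw [LinearMap.pi_apply_eq_sum_univ φ v]
      simp [hy, smul_eq_mul]
    -- A *ᵥ y = 0
    have hAy : ∀ j, ∑ i, A i j * y i = 0 := by
      intro j
      have := hφ (A.mulVec (fun k => if k = j then 1 else 0))
        ⟨(fun k => if k = j then 1 else 0), rfl⟩
      rw [hφeq] at this
      simpa [Matrix.mulVec, dotProduct, mul_comm] using this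
    rw [hφeq]
    have : ∑ i, A i i * y i = 0 := by
      rw [← quad_eq_diag n A hA y]
      have : ∀ i, (∑ j, A i j * y j) = 0 := by
        intro i
        have h := hAy i
        rw [← h]
        refine Finset.sum_congr rfl fun j _ => ?_
        have := congrFun (congrFun hA j) i
        simp only [Matrix.transpose_apply] at this
        rw [this]
      simp [this]
    simpa using this
  obtain ⟨x, hx⟩ := key
  exact ⟨x, by funext i; exact congrFun hx i⟩
end

section
/- Let G be a finite abelian group, V = G/2G the ℤ/2-vector space quotient, and λ : V × V → ℤ/2 a symmetric bilinear form. Then there exists d ∈ G such that for all y ∈ G, λ([y],[y]) = λ([y],[d]), where [·] denotes the class in V. -/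
/-- The subgroup `2G` of an abelian group `G`. -/
def twoSub (G : Type*) [AddCommGroup G] : AddSubgroup G :=
  (2 • (AddMonoidHom.id G)).range

/-- Let `G` be a finite abelian group, `V = G/2G` the associated
`ℤ/2`-vector space, and `λ : V × V → ℤ/2` a symmetric bilinear (biadditive) form.  Then there
exists `d ∈ G` such that `λ [y] [y] = λ [y] [d]` for all `y ∈ G`. -/
theorem diag_functional_lifts (G : Type*) [AddCommGroup G] [Finite G]
    (l : (G ⧸ twoSub G) →+ ((G ⧸ twoSub G) →+ ZMod 2))
    (hsymm : ∀ x y : G ⧸ twoSub G, l x y = l y x) :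
    ∃ d : G, ∀ y : G,
      l (QuotientAddGroup.mk y) (QuotientAddGroup.mk y) =
        l (QuotientAddGroup.mk y) (QuotientAddGroup.mk d) := by
  classical
  letI : Module (ZMod 2) (G ⧸ twoSub G) :=
    QuotientAddGroup.zmodModule (H := twoSub G) (fun x => ⟨x, rfl⟩)
  set V := G ⧸ twoSub G
  haveI : Module.Finite (ZMod 2) V := Module.Finite.of_finite
  -- the bilinear form as a linear map into the dual
  let B : V →ₗ[ZMod 2] Module.Dual (ZMod 2) V :=
    { toFun := fun v => ((l v).toZModLinearMap 2)
      map_add' := by intro x y; ext w; simp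
      map_smul' := by
        intro c x; ext w
        simp [ZMod.map_smul l c x] }
  -- the quadratic/diagonal functional is linear in characteristic 2
  have hq_add : ∀ x y : V, l (x + y) (x + y) = l x x + l y y := by
    intro x y
    have h2 : l x y + l x y = 0 := CharTwo.add_self_eq_zero _
    simp only [map_add, AddMonoidHom.add_apply]
    rw [hsymm y x, add_assoc, ← add_assoc (l x y), h2, zero_add]
  let qadd : V →+ ZMod 2 :=
    { toFun := fun v => l v v
      map_zero' := by simp
      map_add' := hq_add }
  let q : Module.Dual (ZMod 2) V := qadd.toZModLinearMap 2
  -- q vanishes on ker B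
  have hq_ann : q ∈ (LinearMap.ker B).dualAnnihilator := by
    rw [Submodule.mem_dualAnnihilator]
    intro w hw
    have : B w = 0 := hw
    have := LinearMap.congr_fun this w
    simpa [q, qadd, B] using this
  rw [← LinearMap.range_dualMap_eq_dualAnnihilator_ker B] at hq_ann
  obtain ⟨ξ, hξ⟩ := hq_ann
  obtain ⟨dV, hdV⟩ := (Module.evalEquiv (ZMod 2) V).surjective ξ
  obtain ⟨d, rfl⟩ := QuotientAddGroup.mk_surjective dV
  refine ⟨d, fun y => ?_⟩
  have := LinearMap.congr_fun hξ (QuotientAddGroup.mk y)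
  simp only [LinearMap.dualMap_apply'] at this
  rw [← hdV] at this
  simpa [q, qadd, B, Module.evalEquiv, Module.Dual.eval] using this.symm
end
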